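/- arXiv:2207.09803 — 2 statements merged into one kernel-verified Lean document; each statement's English description precedes it below -/
import Mathlib

section
/- Let G be a finite simple graph whose vertex set is partitioned into sets M_1, …, M_d such that each M_i is a clique or an independent set of G and any two distinct parts are either completely joined by edges or have no edges between them. Let E_Q be the set of pairs {i, j} with i ≠ j such that M_i and M_j are completely joined, let m_i = |M_i|, and let 0 ≤ k ≤ |V(G)|. Then the maximum of e_G(S) over all vertex subsets S with |S| = k equals the maximum, over all integer vectors (x_1, …, x_d) with 0 ≤ x_i ≤ m_i for all i and Σ_i x_i = k, of Σ_{{i,j} ∈ E_Q} x_i x_j + Σ_{i : M_i is a clique} x_i (x_i − 1)/2. -/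
/-!
Count ordered pairs of adjacent vertices of `S` part by part. Between two distinct modules `M i`,
`M j` there are `|S ∩ M i| * |S ∩ M j|` of them or none, according as the modules are joined or
not; inside a module there are `c * (c - 1)` with `c = |S ∩ M i|` if it is a clique and none if it
is independent. Halving, `e_G(S)` is the IQP objective at `x i = |S ∩ M i|`, and every feasible
`x` arises this way by choosing `x i` vertices in each `M i`. So both suprema range over the same
set of values.
-/

open Classical Finset

/-- Number of edges of the induced subgraph `G[S]`. -/
noncomputable def edgesIn {V : Type*} [Fintype V] (G : SimpleGraph V) (S : Finset V) : ℕ :=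
  (G.edgeFinset.filter fun e => ∀ v ∈ e, v ∈ S).card

theorem Finset.sum_product_self_eq_sum_diag_add_two_nsmul {ι β : Type*} [LinearOrder ι]
    [AddCommMonoid β] (s : Finset ι) (g : ι → ι → β) (hg : ∀ i j, g i j = g j i) :
    ∑ p ∈ s ×ˢ s, g p.1 p.2 = ∑ i ∈ s, g i i + 2 • ∑ p ∈ s ×ˢ s with p.1 < p.2, g p.1 p.2 := by
  have htrichotomy : ∀ p : ι × ι, g p.1 p.2 = (if p.1 = p.2 then g p.1 p.2 else 0) +
      ((if p.1 < p.2 then g p.1 p.2 else 0) + (if p.2 < p.1 then g p.1 p.2 else 0)) := by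
    intro p
    rcases lt_trichotomy p.1 p.2 with h | h | h
    · simp [h, h.ne, h.not_gt]
    · simp [h]
    · simp [h, h.ne', h.not_gt]
  have hdiag : ∑ p ∈ s ×ˢ s with p.1 = p.2, g p.1 p.2 = ∑ i ∈ s, g i i := by
    rw [← diag_eq_filter, diag, sum_map]; rfl
  have hswap : ∑ p ∈ s ×ˢ s with p.2 < p.1, g p.1 p.2 = ∑ p ∈ s ×ˢ s with p.1 < p.2, g p.1 p.2 :=
    sum_nbij' Prod.swap Prod.swap (by simp +contextual) (by simp +contextual) (by simp) (by simp)
      fun p _ => hg _ _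
  rw [sum_congr rfl fun p _ => htrichotomy p, sum_add_distrib, sum_add_distrib, ← sum_filter,
    ← sum_filter, ← sum_filter, hdiag, hswap, two_nsmul]

namespace SimpleGraph

variable {V : Type*} (G : SimpleGraph V) {A B : Finset V}

theorem card_interedges_comm (A B : Finset V) : #(G.interedges A B) = #(G.interedges B A) :=
  have := G.symm
  Rel.card_interedges_comm A B

theorem card_interedges_of_forall_adj (h : ∀ u ∈ A, ∀ v ∈ B, G.Adj u v) :
    #(G.interedges A B) = #A * #B := by
  rw [interedges_def,
    filter_true_of_mem fun _ hp => h _ (mem_product.1 hp).1 _ (mem_product.1 hp).2, card_product]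

theorem interedges_eq_empty_of_forall_not_adj (h : ∀ u ∈ A, ∀ v ∈ B, ¬ G.Adj u v) :
    G.interedges A B = ∅ :=
  filter_false_of_mem fun _ hp => h _ (mem_product.1 hp).1 _ (mem_product.1 hp).2

theorem card_interedges_self_of_isClique (h : G.IsClique (A : Set V)) :
    #(G.interedges A A) = #A * (#A - 1) := by
  have : G.interedges A A = A.offDiag := by
    ext ⟨u, v⟩
    simp only [mk_mem_interedges_iff, mem_offDiag]
    exact ⟨fun ⟨hu, hv, huv⟩ => ⟨hu, hv, huv.ne⟩, fun ⟨hu, hv, huv⟩ => ⟨hu, hv, h hu hv huv⟩⟩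
  rw [this, offDiag_card, Nat.mul_sub_one]

theorem card_interedges_of_subset {A' B' : Finset V} (hA : A ⊆ A') (hB : B ⊆ B')
    (h : (∀ u ∈ A', ∀ v ∈ B', G.Adj u v) ∨ ∀ u ∈ A', ∀ v ∈ B', ¬ G.Adj u v) :
    #(G.interedges A B) = if ∀ u ∈ A', ∀ v ∈ B', G.Adj u v then #A * #B else 0 := by
  split_ifs with hadj
  · exact G.card_interedges_of_forall_adj fun u hu v hv => hadj u (hA hu) v (hB hv)
  · rw [G.interedges_eq_empty_of_forall_not_adj fun u hu v hv =>
      h.resolve_left hadj u (hA hu) v (hB hv), card_empty]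

theorem card_interedges_self_of_subset {A' : Finset V} (hA : A ⊆ A')
    (h : G.IsClique (A' : Set V) ∨ ∀ u ∈ A', ∀ v ∈ A', ¬ G.Adj u v) :
    #(G.interedges A A) = if G.IsClique (A' : Set V) then #A * (#A - 1) else 0 := by
  split_ifs with hclique
  · exact G.card_interedges_self_of_isClique (hclique.subset hA)
  · rw [G.interedges_eq_empty_of_forall_not_adj fun u hu v hv =>
      h.resolve_left hclique u (hA hu) v (hA hv), card_empty]

end SimpleGraph

theorem two_mul_edgesIn {V : Type*} [Fintype V] (G : SimpleGraph V) (S : Finset V) :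
    2 * edgesIn G S = #(G.interedges S S) := by
  set GS := ((⊤ : G.Subgraph).induce (S : Set V)).spanningCoe
  have hGS : ∀ u v, GS.Adj u v ↔ u ∈ S ∧ v ∈ S ∧ G.Adj u v := fun u v => by simp [GS]
  have hedges : edgesIn G S = #GS.edgeFinset := by
    unfold edgesIn
    congr 1
    ext e
    induction e using Sym2.ind with
    | _ u v =>
      simp only [mem_filter, SimpleGraph.mem_edgeFinset, SimpleGraph.mem_edgeSet, Sym2.mem_iff,
        forall_eq_or_imp, forall_eq, hGS]
      tauto
  rw [hedges, GS.two_mul_card_edgeFinset]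
  congr 1
  ext
  simp only [hGS, mem_filter, mem_univ, true_and, SimpleGraph.interedges_def, mem_product]
  tauto

section Partition

open Function

variable {V ι : Type*} [DecidableEq V] {M : ι → Finset V}

theorem pairwise_disjoint_inter (hdisj : Pairwise (Disjoint on M)) (S : Finset V) :
    Pairwise (Disjoint on fun i => S ∩ M i) := fun _ _ hij =>
  (hdisj hij).mono inter_subset_right inter_subset_right

variable [Fintype ι]

theorem biUnion_inter_eq_self (hcover : ∀ v, ∃ i, v ∈ M i) (S : Finset V) :
    univ.biUnion (fun i => S ∩ M i) = S := by
  ext v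
  simp only [mem_biUnion, mem_univ, true_and, mem_inter]
  exact ⟨fun ⟨_, hv, _⟩ => hv, fun hv => (hcover v).imp fun _ hi => ⟨hv, hi⟩⟩

theorem sum_card_inter_eq_card (hdisj : Pairwise (Disjoint on M)) (hcover : ∀ v, ∃ i, v ∈ M i)
    (S : Finset V) : ∑ i, #(S ∩ M i) = #S := by
  conv_rhs => rw [← biUnion_inter_eq_self hcover S]
  exact (card_biUnion fun _ _ _ _ hij => pairwise_disjoint_inter hdisj S hij).symm

theorem exists_card_inter_eq (hdisj : Pairwise (Disjoint on M)) {x : ι → ℕ}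
    (hx : ∀ i, x i ≤ #(M i)) : ∃ S : Finset V, ∀ i, #(S ∩ M i) = x i := by
  choose T hTM hTcard using fun i => exists_subset_card_eq (hx i)
  refine ⟨univ.biUnion T, fun i => ?_⟩
  suffices univ.biUnion T ∩ M i = T i by rw [this, hTcard]
  ext v
  simp only [mem_inter, mem_biUnion, mem_univ, true_and]
  refine ⟨fun ⟨⟨j, hvj⟩, hvi⟩ => ?_, fun hv => ⟨⟨i, hv⟩, hTM i hv⟩⟩
  obtain rfl : j = i := by_contra fun hji => disjoint_left.1 (hdisj hji) (hTM j hvj) hvi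
  exact hvj

theorem card_interedges_self_eq_sum_inter (G : SimpleGraph V) (hdisj : Pairwise (Disjoint on M))
    (hcover : ∀ v, ∃ i, v ∈ M i) (S : Finset V) :
    #(G.interedges S S) = ∑ p ∈ univ ×ˢ univ, #(G.interedges (S ∩ M p.1) (S ∩ M p.2)) := by
  have hdisjS := pairwise_disjoint_inter hdisj S
  conv_lhs => rw [← biUnion_inter_eq_self hcover S]
  rw [G.interedges_biUnion_left, card_biUnion fun i _ j _ hij =>
    G.interedges_disjoint_left (hdisjS hij) _, sum_product]
  refine sum_congr rfl fun i _ => ?_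
  rw [G.interedges_biUnion_right, card_biUnion fun j _ k _ hjk =>
    G.interedges_disjoint_right _ (hdisjS hjk)]

variable [LinearOrder ι] [Fintype V]

noncomputable def iqpObjective (G : SimpleGraph V) (M : ι → Finset V) (x : ι → ℕ) : ℕ :=
  ∑ p ∈ univ.filter (fun p : ι × ι => p.1 < p.2 ∧ ∀ u ∈ M p.1, ∀ v ∈ M p.2, G.Adj u v),
      x p.1 * x p.2
    + ∑ i ∈ univ.filter (fun i : ι => G.IsClique (M i : Set V)), x i * (x i - 1) / 2

theorem edgesIn_eq_iqpObjective (G : SimpleGraph V) (hdisj : Pairwise (Disjoint on M))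
    (hcover : ∀ v, ∃ i, v ∈ M i)
    (hmod : ∀ i, G.IsClique (M i : Set V) ∨ ∀ u ∈ M i, ∀ v ∈ M i, ¬ G.Adj u v)
    (hjoin : ∀ i j, i ≠ j →
      (∀ u ∈ M i, ∀ v ∈ M j, G.Adj u v) ∨ (∀ u ∈ M i, ∀ v ∈ M j, ¬ G.Adj u v))
    (S : Finset V) : edgesIn G S = iqpObjective G M fun i => #(S ∩ M i) := by
  have hdiag : ∑ i, #(G.interedges (S ∩ M i) (S ∩ M i)) =
      2 * ∑ i with G.IsClique (M i : Set V), #(S ∩ M i) * (#(S ∩ M i) - 1) / 2 := by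
    rw [mul_sum, sum_filter]
    refine sum_congr rfl fun i _ => ?_
    rw [G.card_interedges_self_of_subset inter_subset_right (hmod i)]
    split_ifs
    · exact (Nat.mul_div_cancel' (Nat.even_mul_pred_self _).two_dvd).symm
    · rfl
  have hoff : ∑ p ∈ univ ×ˢ univ with p.1 < p.2, #(G.interedges (S ∩ M p.1) (S ∩ M p.2)) =
      ∑ p ∈ univ.filter (fun p : ι × ι => p.1 < p.2 ∧ ∀ u ∈ M p.1, ∀ v ∈ M p.2, G.Adj u v),
        #(S ∩ M p.1) * #(S ∩ M p.2) := by
    rw [univ_product_univ, sum_filter, sum_filter]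
    refine sum_congr rfl fun p _ => ?_
    by_cases hlt : p.1 < p.2
    · rw [G.card_interedges_of_subset inter_subset_right inter_subset_right
        (hjoin p.1 p.2 hlt.ne)]
      simp [hlt]
    · simp [hlt]
  apply Nat.eq_of_mul_eq_mul_left two_pos
  rw [two_mul_edgesIn, card_interedges_self_eq_sum_inter G hdisj hcover,
    sum_product_self_eq_sum_diag_add_two_nsmul univ (fun i j => #(G.interedges (S ∩ M i) (S ∩ M j)))
      fun i j => G.card_interedges_comm _ _,
    hdiag, hoff, iqpObjective, smul_eq_mul, mul_add, add_comm]

end Partition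

theorem densest_k_subgraph_iqp_general {V : Type*} [Fintype V] [DecidableEq V]
    (G : SimpleGraph V) (d : ℕ) (M : Fin d → Finset V)
    (hdisj : ∀ i j, i ≠ j → Disjoint (M i) (M j))
    (hcover : ∀ v : V, ∃ i, v ∈ M i)
    (hmod : ∀ i, G.IsClique (M i : Set V) ∨ ∀ u ∈ M i, ∀ v ∈ M i, ¬ G.Adj u v)
    (hjoin : ∀ i j, i ≠ j →
      (∀ u ∈ M i, ∀ v ∈ M j, G.Adj u v) ∨ (∀ u ∈ M i, ∀ v ∈ M j, ¬ G.Adj u v))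
    (k : ℕ) :
    sSup {n : ℕ | ∃ S : Finset V, S.card = k ∧ n = edgesIn G S} =
    sSup {n : ℕ | ∃ x : Fin d → ℕ,
      (∀ i, x i ≤ (M i).card) ∧ (∑ i, x i) = k ∧
      n = ∑ p ∈ Finset.univ.filter (fun p : Fin d × Fin d =>
            p.1 < p.2 ∧ ∀ u ∈ M p.1, ∀ v ∈ M p.2, G.Adj u v),
          x p.1 * x p.2
        + ∑ i ∈ Finset.univ.filter (fun i : Fin d => G.IsClique (M i : Set V)),
          x i * (x i - 1) / 2} := by
  have hpairwise : Pairwise (Function.onFun Disjoint M) := fun i j => hdisj i j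
  have hobj := edgesIn_eq_iqpObjective G hpairwise hcover hmod hjoin
  congr 1
  ext n
  constructor
  · rintro ⟨S, rfl, rfl⟩
    exact ⟨fun i => #(S ∩ M i), fun i => card_le_card inter_subset_right,
      sum_card_inter_eq_card hpairwise hcover S, hobj S⟩
  · rintro ⟨x, hx, rfl, rfl⟩
    obtain ⟨S, hS⟩ := exists_card_inter_eq hpairwise hx
    refine ⟨S, ?_, ?_⟩
    · rw [← sum_card_inter_eq_card hpairwise hcover S]
      exact sum_congr rfl fun i _ => hS i
    · exact ((hobj S).trans (congrArg _ (funext hS))).symm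

/-- Correctness of the IQP formulation of Densest k-Subgraph in
terms of a partition of the vertex set into modules `M 1, …, M d`: the maximum
number of edges of an induced subgraph on `k` vertices equals the maximum of
`∑_{{i,j} ∈ E_Q} x i ⬝ x j + ∑_{i : M i clique} x i (x i − 1)/2` over all integer
vectors `x` with `0 ≤ x i ≤ m i` and `∑ x i = k`. -/
theorem densest_k_subgraph_iqp {V : Type*} [Fintype V] [DecidableEq V]
    (G : SimpleGraph V) (d : ℕ) (M : Fin d → Finset V)
    (hdisj : ∀ i j, i ≠ j → Disjoint (M i) (M j))
    (hcover : ∀ v : V, ∃ i, v ∈ M i)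
    (hmod : ∀ i, G.IsClique (M i : Set V) ∨ ∀ u ∈ M i, ∀ v ∈ M i, ¬ G.Adj u v)
    (hjoin : ∀ i j, i ≠ j →
      (∀ u ∈ M i, ∀ v ∈ M j, G.Adj u v) ∨ (∀ u ∈ M i, ∀ v ∈ M j, ¬ G.Adj u v))
    (k : ℕ) (hk : k ≤ Fintype.card V) :
    sSup {n : ℕ | ∃ S : Finset V, S.card = k ∧ n = edgesIn G S} =
    sSup {n : ℕ | ∃ x : Fin d → ℕ,
      (∀ i, x i ≤ (M i).card) ∧ (∑ i, x i) = k ∧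
      n = ∑ p ∈ Finset.univ.filter (fun p : Fin d × Fin d =>
            p.1 < p.2 ∧ ∀ u ∈ M p.1, ∀ v ∈ M p.2, G.Adj u v),
          x p.1 * x p.2
        + ∑ i ∈ Finset.univ.filter (fun i : Fin d => G.IsClique (M i : Set V)),
          x i * (x i - 1) / 2} :=
  densest_k_subgraph_iqp_general G d M hdisj hcover hmod hjoin k
end

section
/- Let G be a finite simple graph and let X ⊆ V(G) be a twin cover of G, i.e., for every edge {u, v} of G, either u ∈ X or v ∈ X, or N[u] = N[v]. Then every connected component of the induced subgraph G[V(G) \ X] is a clique. Consequently, every twin cover of G is a cluster deletion set of G, and the minimum size of a cluster deletion set of G is at most the minimum size of a twin cover of G. -/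
open Classical Finset

/-- `X` is a twin cover of `G`: every edge `{u, v}` satisfies `u ∈ X` or
`v ∈ X`, or `N[u] = N[v]`. -/
def IsTwinCover {V : Type*} (G : SimpleGraph V) (X : Set V) : Prop :=
  ∀ u v : V, G.Adj u v →
    u ∈ X ∨ v ∈ X ∨ insert u (G.neighborSet u) = insert v (G.neighborSet v)

/-- `D` is a cluster deletion set of `G`: every connected component of the
induced subgraph `G[V \ D]` is a clique (equivalently, any two distinct
reachable vertices of `G[V \ D]` are adjacent). -/
def IsClusterDeletionSet {V : Type*} (G : SimpleGraph V) (D : Set V) : Prop :=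
  ∀ a b : ↥(Dᶜ), (G.induce Dᶜ).Reachable a b → a ≠ b → (G.induce Dᶜ).Adj a b

/-!
Outside a twin cover `X`, every edge joins two vertices with the same closed neighbourhood in `G`.
Equality of closed neighbourhoods is an equivalence relation, so it holds between any two vertices
of the same component of `G[V \ X]`; and `b ∈ N[b] = N[a]` means `b = a` or `b` is adjacent to `a`.
-/

namespace IsTwinCover

variable {V : Type*} {G : SimpleGraph V} {X : Set V}

theorem closedNeighborSet_eq_of_adj (hX : IsTwinCover G X) {a b : ↥Xᶜ}
    (hab : (G.induce Xᶜ).Adj a b) :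
    insert (a : V) (G.neighborSet a) = insert (b : V) (G.neighborSet b) :=
  ((hX a b hab).resolve_left a.2).resolve_left b.2

theorem closedNeighborSet_eq_of_reachable (hX : IsTwinCover G X) {a b : ↥Xᶜ}
    (hab : (G.induce Xᶜ).Reachable a b) :
    insert (a : V) (G.neighborSet a) = insert (b : V) (G.neighborSet b) := by
  obtain ⟨w⟩ := hab
  induction w with
  | nil => rfl
  | cons hadj _ ih => exact (hX.closedNeighborSet_eq_of_adj hadj).trans ih

theorem isClusterDeletionSet (hX : IsTwinCover G X) : IsClusterDeletionSet G X := by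
  intro a b hab hne
  have hb : (b : V) ∈ insert (a : V) (G.neighborSet a) := by
    rw [hX.closedNeighborSet_eq_of_reachable hab]
    exact Set.mem_insert _ _
  rcases hb with hba | hadj
  · exact absurd (Subtype.ext hba).symm hne
  · exact hadj

end IsTwinCover

theorem twin_cover_is_cluster_deletion_set_general {V : Type*}
    (G : SimpleGraph V) (X : Finset V) (hX : IsTwinCover G (↑X : Set V)) :
    IsClusterDeletionSet G (↑X : Set V) ∧
    sInf {n : ℕ | ∃ D : Finset V, IsClusterDeletionSet G (↑D : Set V) ∧ D.card = n} ≤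
      sInf {n : ℕ | ∃ Y : Finset V, IsTwinCover G (↑Y : Set V) ∧ Y.card = n} := by
  refine ⟨hX.isClusterDeletionSet, csInf_le_csInf (OrderBot.bddBelow _) ⟨X.card, X, hX, rfl⟩ ?_⟩
  rintro n ⟨Y, hY, rfl⟩
  exact ⟨Y, hY.isClusterDeletionSet, rfl⟩

/-- If `X` is a twin cover of `G`, then every connected
component of `G[V \ X]` is a clique; consequently every twin cover is a
cluster deletion set, and the minimum size of a cluster deletion set is at
most the minimum size of a twin cover. -/
theorem twin_cover_is_cluster_deletion_set {V : Type*} [Fintype V] [DecidableEq V]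
    (G : SimpleGraph V) (X : Finset V) (hX : IsTwinCover G (↑X : Set V)) :
    IsClusterDeletionSet G (↑X : Set V) ∧
    sInf {n : ℕ | ∃ D : Finset V, IsClusterDeletionSet G (↑D : Set V) ∧ D.card = n} ≤
      sInf {n : ℕ | ∃ Y : Finset V, IsTwinCover G (↑Y : Set V) ∧ Y.card = n} :=
  twin_cover_is_cluster_deletion_set_general G X hX
end
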